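/- Fix an integer k ≥ 3. If N, n, r, s are positive integers with n > k, 1 ≤ s ≤ r/2, and R_k(n; r, s) > N, then R_{k+1}(2n - 1; r, s) > 2^N. -/

import Mathlib

/-- `χ` is an `(r,s)`-set-coloring of the complete `k`-uniform hypergraph on `Fin N`:
each `k`-element edge receives a set of exactly `s` colors from the palette `Fin r`. -/
def IsSetColoring (N k r s : ℕ) (χ : Finset (Fin N) → Finset (Fin r)) : Prop :=
  ∀ e : Finset (Fin N), e.card = k → (χ e).card = s

/-- There is a monochromatic `n`-clique: `n` vertices all of whose `k`-element
subsets share a common color. -/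
def HasMonoClique (N k n r : ℕ) (χ : Finset (Fin N) → Finset (Fin r)) : Prop :=
  ∃ S : Finset (Fin N), S.card = n ∧ ∃ c : Fin r, ∀ e ⊆ S, e.card = k → c ∈ χ e

/-- The `k`-uniform set-coloring Ramsey number `R_k(n;r,s)`. -/
noncomputable def setRamsey (k n r s : ℕ) : ℕ :=
  sInf {N | ∀ χ : Finset (Fin N) → Finset (Fin r),
    IsSetColoring N k r s χ → HasMonoClique N k n r χ}

/-- `A_q(m,d)`: the maximum size of a `q`-ary code of length `m` with minimum
Hamming distance at least `d`. -/
noncomputable def maxCode (q m d : ℕ) : ℕ :=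
  sSup {M | ∃ C : Finset (Fin m → Fin q),
    (∀ x ∈ C, ∀ y ∈ C, x ≠ y → d ≤ hammingDist x y) ∧ C.card = M}

/-- The graph on `Fin N` formed by the edges whose color set contains `i`. -/
def colorGraph (N r : ℕ) (χ : Finset (Fin N) → Finset (Fin r)) (i : Fin r) :
    SimpleGraph (Fin N) where
  Adj u v := u ≠ v ∧ i ∈ χ {u, v}
  symm := by
    constructor
    intro u v h
    exact ⟨h.1.symm, by rw [Finset.pair_comm]; exact h.2⟩
  loopless := by constructor; intro u h; exact h.1 rfl

/-- `R'(n;r,s)`: the least `N` such that every `(r,s)`-coloring of `K_N` has a color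
class with chromatic number at least `n`. -/
noncomputable def setRamsey' (n r s : ℕ) : ℕ :=
  sInf {N | ∀ χ : Finset (Fin N) → Finset (Fin r), IsSetColoring N 2 r s χ →
    ∃ i : Fin r, (n : ℕ∞) ≤ (colorGraph N r χ i).chromaticNumber}

/-- The Turán number `ex(N, K_n)`. -/
noncomputable def turanNumber (N n : ℕ) : ℕ :=
  sSup {m | ∃ G : SimpleGraph (Fin N), G.CliqueFree n ∧ G.edgeSet.ncard = m}

namespace StepUpAux

lemma testBit_log2_self {x : ℕ} (hx : x ≠ 0) : x.testBit x.log2 = true := by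
  have h1 : 2 ^ x.log2 ≤ x := Nat.log2_self_le hx
  have h2 : x < 2 ^ (x.log2 + 1) := Nat.lt_log2_self
  have hd : x / 2 ^ x.log2 = 1 := by
    have hp : (2:ℕ) ^ (x.log2 + 1) = 2 * 2 ^ x.log2 := by ring
    apply Nat.div_eq_of_lt_le
    · simpa using h1
    · omega
  rw [Nat.testBit_eq_decide_div_mod_eq, hd]
  simp

lemma testBit_false_of_log2_lt {x j : ℕ} (h : x.log2 < j) : x.testBit j = false := by
  rcases eq_or_ne x 0 with rfl | hx
  · exact Nat.zero_testBit j
  · exact Nat.testBit_lt_two_pow (lt_of_lt_of_le Nat.lt_log2_self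
      (Nat.pow_le_pow_right (by norm_num) h))

lemma log2_eq_of_testBit {x d : ℕ} (h1 : x.testBit d = true)
    (h2 : ∀ j, d < j → x.testBit j = false) : x.log2 = d := by
  have hx : x ≠ 0 := by rintro rfl; rw [Nat.zero_testBit] at h1; exact Bool.noConfusion h1
  have hle : d ≤ x.log2 := by
    by_contra hc
    push_neg at hc
    rw [testBit_false_of_log2_lt hc] at h1
    exact Bool.noConfusion h1
  have hge : x.log2 ≤ d := by
    by_contra hc
    push_neg at hc
    have := h2 _ hc
    rw [testBit_log2_self hx] at this
    exact Bool.noConfusion this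
  omega

lemma agree_of_log2_lt {a b j : ℕ} (h : (a ^^^ b).log2 < j) :
    a.testBit j = b.testBit j := by
  have := testBit_false_of_log2_lt h
  rw [Nat.testBit_xor] at this
  cases ha : a.testBit j <;> cases hb : b.testBit j <;>
    simp [ha, hb] at this ⊢

lemma highbit_of_lt {a b : ℕ} (h : a < b) :
    a.testBit ((a ^^^ b).log2) = false ∧ b.testBit ((a ^^^ b).log2) = true := by
  set d := (a ^^^ b).log2 with hd
  have hne : a ^^^ b ≠ 0 := by
    rw [Ne, xor_eq_zero_iff]; omega
  have htop : (a ^^^ b).testBit d = true := testBit_log2_self hne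
  rw [Nat.testBit_xor] at htop
  have hagree : ∀ j, d < j → a.testBit j = b.testBit j := fun j hj => agree_of_log2_lt hj
  cases ha : a.testBit d <;> cases hb : b.testBit d
  · rw [ha, hb] at htop; exact Bool.noConfusion htop
  · exact ⟨rfl, rfl⟩
  · exfalso
    have : b < a := Nat.lt_of_testBit d hb ha (fun j hj => (hagree j hj).symm)
    omega
  · rw [ha, hb] at htop; exact Bool.noConfusion htop

lemma dxor_ne {a b c : ℕ} (h1 : a < b) (h2 : b < c) :
    (a ^^^ b).log2 ≠ (b ^^^ c).log2 := by
  intro he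
  have H1 := (highbit_of_lt h1).2
  have H2 := (highbit_of_lt h2).1
  rw [he] at H1
  rw [H1] at H2
  exact Bool.noConfusion H2

lemma dxor_max {a b c : ℕ} (h1 : a < b) (h2 : b < c) :
    (a ^^^ c).log2 = max (a ^^^ b).log2 (b ^^^ c).log2 := by
  have hne := dxor_ne h1 h2
  have H1 := highbit_of_lt h1
  have H2 := highbit_of_lt h2
  rcases lt_or_gt_of_ne hne with hlt | hgt
  · rw [max_eq_right hlt.le]
    apply log2_eq_of_testBit
    · rw [Nat.testBit_xor, agree_of_log2_lt hlt, H2.1, H2.2]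
      rfl
    · intro j hj
      rw [Nat.testBit_xor, agree_of_log2_lt (lt_trans hlt hj),
        agree_of_log2_lt hj, Bool.xor_self]
  · rw [max_eq_left hgt.le]
    apply log2_eq_of_testBit
    · rw [Nat.testBit_xor, ← agree_of_log2_lt hgt, H1.1, H1.2]
      rfl
    · intro j hj
      rw [Nat.testBit_xor, agree_of_log2_lt hj,
        agree_of_log2_lt (lt_trans hgt hj), Bool.xor_self]


/-- the color block `{a, ..., b-1}` inside `Fin r`. -/
def seg (r a b : ℕ) : Finset (Fin r) :=
  ((Finset.Ico a b).filter (· < r)).attachFin (fun m hm => (Finset.mem_filter.1 hm).2)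

lemma mem_seg {r a b : ℕ} {x : Fin r} : x ∈ seg r a b ↔ a ≤ x.val ∧ x.val < b := by
  simp [seg, Finset.mem_attachFin, Finset.mem_filter, Finset.mem_Ico, x.2, and_assoc]

lemma card_seg {r a b : ℕ} (h : b ≤ r) : (seg r a b).card = b - a := by
  rw [seg, Finset.card_attachFin, Finset.filter_true_of_mem, Nat.card_Ico]
  intro x hx
  rw [Finset.mem_Ico] at hx
  omega

lemma toFinset_map_list {α β : Type*} [DecidableEq α] [DecidableEq β] (f : α → β)
    (l : List α) : (l.map f).toFinset = l.toFinset.image f := by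
  ext x; simp

lemma nodup_of_chain'_lt {α : Type*} [Preorder α] {l : List α}
    (h : l.IsChain (· < ·)) : l.Nodup := by
  have := List.isChain_iff_pairwise.1 h
  exact this.imp (fun h => ne_of_lt h)

lemma sort_of_chain' {α : Type*} [LinearOrder α] {l : List α}
    (h : l.IsChain (· < ·)) : l.toFinset.sort (· ≤ ·) = l := by
  have hnd : l.Nodup := nodup_of_chain'_lt h
  have hperm : (l.toFinset.sort (· ≤ ·)).Perm l :=
    (Finset.sort_perm_toList _ _).trans (List.toFinset_toList hnd)
  refine (fun hp hs => List.Perm.eq_of_pairwise' (Finset.pairwise_sort _ _) hs hp) hperm ?_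
  exact (List.isChain_iff_pairwise.1 h).imp (fun h => le_of_lt h)

lemma chain'_map_of_lt {γ : Type*} (F : ℕ → γ) (R : γ → γ → Prop) (B : ℕ)
    (hF : ∀ i j, i < j → j < B → R (F i) (F j)) :
    ∀ J : List ℕ, J.IsChain (· < ·) → (∀ x ∈ J, x < B) → (J.map F).IsChain R := by
  intro J
  induction J with
  | nil => intro _ _; simp
  | cons x l IH =>
    intro hc hb
    cases l with
    | nil => simp
    | cons y l' =>
      rw [List.isChain_cons_cons] at hc
      simp only [List.map_cons, List.isChain_cons_cons]
      exact ⟨hF x y hc.1 (hb y (by simp)), IH hc.2 (fun z hz => hb z (by simp [hz]))⟩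

lemma chain'_range'_map_iff {γ : Type*} (F : ℕ → γ) (R : γ → γ → Prop) :
    ∀ (m w : ℕ), ((List.range' w m).map F).IsChain R ↔
      (∀ i, w ≤ i → i + 1 < w + m → R (F i) (F (i + 1))) := by
  intro m
  induction m with
  | zero => intro w; simp; omega
  | succ m IH =>
    intro w
    cases m with
    | zero => simp; omega
    | succ m' =>
      rw [List.range'_succ]
      have h2 : List.range' (w + 1) (m' + 1) = (w+1) :: List.range' (w + 2) m' := by
        rw [List.range'_succ]
      simp only [List.map_cons, h2]
      rw [List.isChain_cons_cons,
        show F (w+1) :: List.map F (List.range' (w+2) m') = List.map F (List.range' (w+1) (m'+1)) by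
          rw [h2]; simp,
        IH (w+1)]
      constructor
      · rintro ⟨h1, h3⟩ i hi hi2
        rcases eq_or_lt_of_le hi with rfl | hlt
        · exact h1
        · exact h3 i hlt (by omega)
      · intro H
        exact ⟨H w le_rfl (by omega), fun i hi hi2 => H i (by omega) (by omega)⟩

lemma zip_range' {γ : Type*} (F : ℕ → ℕ → γ) :
    ∀ (m w : ℕ), List.zipWith F (List.range' w (m+1)) (List.range' (w+1) m)
      = (List.range' w m).map (fun i => F i (i+1)) := by
  intro m
  induction m with
  | zero => intro w; simp
  | succ m IH =>
    intro w
    rw [show List.range' w (m+1+1) = w :: List.range' (w+1) (m+1) from List.range'_succ,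
      show List.range' (w+1) (m+1) = (w+1) :: List.range' (w+1+1) m from List.range'_succ]
    simp only [List.zipWith_cons_cons]
    rw [show (w+1) :: List.range' (w+1+1) m = List.range' (w+1) (m+1) from (List.range'_succ).symm,
      IH (w+1),
      show List.range' w (m+1) = w :: List.range' (w+1) m from List.range'_succ]
    simp


lemma sort_of_chain'_fin {M : ℕ} {l : List (Fin M)} (h : l.IsChain (· < ·)) :
    Finset.sort l.toFinset (· ≤ ·) = l := by
  refine (fun hp hs => List.Perm.eq_of_pairwise' (Finset.pairwise_sort _ _) hs hp) ?_ ?_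
  · exact (Finset.sort_perm_toList _ _).trans (List.toFinset_toList (nodup_of_chain'_lt h))
  · exact (List.isChain_iff_pairwise.1 h).imp (fun hx => le_of_lt hx)

/-- Finite hypergraph Ramsey theorem (arbitrary targets per color). -/
theorem ramsey_exists {α : Type} [LinearOrder α] [DecidableEq α] :
    ∀ (u r : ℕ) (t : Fin r → ℕ), ∃ M : ℕ, ∀ A : Finset α, M ≤ A.card →
      ∀ χ : Finset α → Fin r, ∃ (c : Fin r) (S : Finset α), S ⊆ A ∧ S.card = t c ∧
        ∀ e ⊆ S, e.card = u → χ e = c := by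
  intro u
  induction u with
  | zero =>
    intro r t
    refine ⟨Finset.univ.sup t, fun A hA χ => ?_⟩
    refine ⟨χ ∅, ?_⟩
    obtain ⟨S, hSA, hS⟩ := Finset.exists_subset_card_eq
      (le_trans (Finset.le_sup (Finset.mem_univ (χ ∅))) hA)
    refine ⟨S, hSA, hS, fun e _ hc => ?_⟩
    rw [Finset.card_eq_zero.mp hc]
  | succ u IHu =>
    intro r
    suffices H : ∀ sm : ℕ, ∀ t : Fin r → ℕ, (∑ c, t c) = sm → ∃ M : ℕ, ∀ A : Finset α,
        M ≤ A.card → ∀ χ : Finset α → Fin r, ∃ (c : Fin r) (S : Finset α), S ⊆ A ∧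
          S.card = t c ∧ ∀ e ⊆ S, e.card = u + 1 → χ e = c by
      intro t; exact H _ t rfl
    intro sm
    induction sm using Nat.strong_induction_on with
    | _ sm IH =>
      intro t hts
      rcases Nat.eq_zero_or_pos r with rfl | hr
      · exact ⟨0, fun A _ χ => (χ ∅).elim0⟩
      by_cases h0 : ∃ c, t c = 0
      · obtain ⟨c, hc⟩ := h0
        refine ⟨0, fun A _ χ => ⟨c, ∅, Finset.empty_subset _, by simp [hc], ?_⟩⟩
        intro e he hce
        have : e = ∅ := Finset.subset_empty.mp he
        subst this
        simp at hce
      push_neg at h0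
      have hsm : 1 ≤ sm := by
        have h1 : t ⟨0, hr⟩ ≤ ∑ c, t c :=
          Finset.single_le_sum (fun i _ => Nat.zero_le _) (Finset.mem_univ _)
        have h2 := h0 ⟨0, hr⟩
        omega
      have hM : ∀ c : Fin r, ∃ M : ℕ, ∀ A : Finset α, M ≤ A.card →
          ∀ χ : Finset α → Fin r, ∃ (c' : Fin r) (S : Finset α), S ⊆ A ∧
            S.card = Function.update t c (t c - 1) c' ∧
            ∀ e ⊆ S, e.card = u + 1 → χ e = c' := by
        intro c
        apply IH (sm - 1) (by omega)
        have h1 : ∑ x, Function.update t c (t c - 1) x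
            = (t c - 1) + ∑ x ∈ Finset.univ \ {c}, t x :=
          Finset.sum_update_of_mem (Finset.mem_univ c) t (t c - 1)
        have h2 : (∑ x, t x) = t c + ∑ x ∈ Finset.univ \ {c}, t x := by
          rw [← Finset.sum_update_of_mem (Finset.mem_univ c) t (t c)]
          congr 1
          ext x
          by_cases hx : x = c <;> simp [hx, Function.update]
        have := h0 c
        omega
      choose Mc hMc using hM
      obtain ⟨M', hM'⟩ := IHu r Mc
      refine ⟨M' + 1, fun A hA χ => ?_⟩
      have hAne : A.Nonempty := Finset.card_pos.mp (by omega)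
      set v := A.min' hAne with hv
      have hvA : v ∈ A := A.min'_mem hAne
      set A' := A.erase v with hA'def
      have hA'c : M' ≤ A'.card := by
        rw [hA'def, Finset.card_erase_of_mem hvA]; omega
      obtain ⟨c, T, hTA, hTc, hT⟩ := hM' A' hA'c (fun w => χ (insert v w))
      obtain ⟨c', S', hS'T, hS'c, hS'⟩ := hMc c T (le_of_eq hTc.symm) χ
      by_cases hcc : c' = c
      · subst hcc
        have hS'card : S'.card = t c' - 1 := by
          rw [hS'c]; simp [Function.update]
        have hvS' : v ∉ S' := fun hmem =>
          (Finset.notMem_erase v A) (hS'T.trans hTA hmem)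
        refine ⟨c', insert v S', ?_, ?_, ?_⟩
        · exact Finset.insert_subset hvA ((hS'T.trans hTA).trans (Finset.erase_subset _ _))
        · rw [Finset.card_insert_of_notMem hvS', hS'card]
          have := h0 c'
          omega
        · intro e he hce
          by_cases hve : v ∈ e
          · have herase : insert v (e.erase v) = e := Finset.insert_erase hve
            rw [← herase]
            apply hT
            · intro x hx
              rcases Finset.mem_erase.mp hx with ⟨hx1, hx2⟩
              rcases Finset.mem_insert.mp (he hx2) with h | h
              · exact absurd h hx1
              · exact hS'T h
            · rw [Finset.card_erase_of_mem hve, hce]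
              omega
          · apply hS' e _ hce
            intro x hx
            rcases Finset.mem_insert.mp (he hx) with h | h
            · exact absurd h (fun hh => hve (hh ▸ hx))
            · exact h
      · refine ⟨c', S', (hS'T.trans hTA).trans (Finset.erase_subset _ _), ?_, hS'⟩
        rw [hS'c]
        simp [Function.update, hcc]


theorem ramsey_set (u n' r s' : ℕ) (hr : 0 < r) (hs : 1 ≤ s') :
    ∃ M : ℕ, ∀ χ : Finset (Fin M) → Finset (Fin r),
      IsSetColoring M u r s' χ → HasMonoClique M u n' r χ := by
  obtain ⟨M0, hM0⟩ := ramsey_exists (α := ℕ) u r (fun _ => n')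
  refine ⟨M0 + 1, fun χ hχ => ?_⟩
  have hMpos : 0 < M0 + 1 := by omega
  set toFin : ℕ → Fin (M0 + 1) := fun x => ⟨x % (M0 + 1), Nat.mod_lt _ hMpos⟩ with htoFin
  have hinj : ∀ x, x < M0 + 1 → (toFin x).val = x := fun x hx => Nat.mod_eq_of_lt hx
  have hinjOn : ∀ (B : Finset ℕ), (∀ x ∈ B, x < M0 + 1) → Set.InjOn toFin B := by
    intro B hB x hx y hy hxy
    have : (toFin x).val = (toFin y).val := by rw [hxy]
    rwa [hinj x (hB x hx), hinj y (hB y hy)] at this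
  classical
  set χ₀ : Finset ℕ → Fin r := fun e =>
    if h : (χ (e.image toFin)).Nonempty then (χ (e.image toFin)).min' h else ⟨0, hr⟩ with hχ₀
  obtain ⟨c, S, hSA, hScard, hSmono⟩ := hM0 (Finset.range (M0 + 1)) (by simp) χ₀
  have hSlt : ∀ x ∈ S, x < M0 + 1 := fun x hx => Finset.mem_range.mp (hSA hx)
  refine ⟨S.image toFin, ?_, c, ?_⟩
  · rw [Finset.card_image_of_injOn (hinjOn S hSlt), hScard]
  · intro e' he' hce'
    obtain ⟨e, heS, hee'⟩ := Finset.subset_image_iff.mp he'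
    have helt : ∀ x ∈ e, x < M0 + 1 := fun x hx => hSlt x (heS hx)
    have hecard : e.card = u := by
      rw [← hce', ← hee', Finset.card_image_of_injOn (hinjOn e helt)]
    have hmono := hSmono e heS hecard
    have hne : (χ (e.image toFin)).Nonempty := by
      rw [hee']
      apply Finset.card_pos.mp
      rw [hχ e' hce']
      omega
    rw [hχ₀] at hmono
    simp only [dif_pos hne] at hmono
    rw [← hee', ← hmono]
    exact Finset.min'_mem _ _


lemma nodup_of_chain'_gt {α : Type*} [Preorder α] {l : List α}
    (h : l.IsChain (· > ·)) : l.Nodup :=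
  (List.isChain_iff_pairwise.1 h).imp (fun h => ne_of_gt h)

def dnat {N : ℕ} (x y : Fin (2^N)) : ℕ := (x.val ^^^ y.val).log2

lemma dnat_lt {N : ℕ} (hN : 1 ≤ N) (x y : Fin (2^N)) : dnat x y < N := by
  have hx : (x.val ^^^ y.val) < 2^N := Nat.xor_lt_two_pow x.2 y.2
  rcases eq_or_ne (x.val ^^^ y.val) 0 with h0 | h0
  · rw [dnat, h0]
    simpa [Nat.log2] using Nat.lt_of_lt_of_le Nat.zero_lt_one hN
  · exact (Nat.log2_lt h0).2 hx

def dfin {N : ℕ} (hN : 1 ≤ N) (x y : Fin (2^N)) : Fin N := ⟨dnat x y, dnat_lt hN x y⟩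

def pcol (N r s : ℕ) (hN : 1 ≤ N) (χ : Finset (Fin N) → Finset (Fin r))
    (l : List (Fin N)) : Finset (Fin r) :=
  if l.IsChain (· < ·) ∨ l.IsChain (· > ·) then χ l.toFinset
  else if l.getD 0 ⟨0, hN⟩ < l.getD 1 ⟨0, hN⟩ then seg r 0 s else seg r s (2*s)

def chi' (N r s : ℕ) (hN : 1 ≤ N) (χ : Finset (Fin N) → Finset (Fin r)) :
    Finset (Fin (2^N)) → Finset (Fin r) :=
  fun e => pcol N r s hN χ
    (List.zipWith (dfin hN) (e.sort (· ≤ ·)) (e.sort (· ≤ ·)).tail)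

lemma chi'_isSetColoring {N k r s : ℕ} (hN : 1 ≤ N) (hs : 1 ≤ s) (h2s : 2*s ≤ r)
    (χ : Finset (Fin N) → Finset (Fin r)) (hχ : IsSetColoring N k r s χ) :
    IsSetColoring (2^N) (k+1) r s (chi' N r s hN χ) := by
  intro e he
  have hlen : (e.sort (· ≤ ·)).length = k + 1 := by rw [Finset.length_sort, he]
  have hdlen : (List.zipWith (dfin hN) (e.sort (· ≤ ·)) (e.sort (· ≤ ·)).tail).length = k := by
    rw [List.length_zipWith, List.length_tail, hlen]
    simp
  rw [chi', pcol]
  split_ifs with h1 h2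
  · apply hχ
    rcases h1 with h1 | h1
    · rw [List.toFinset_card_of_nodup (nodup_of_chain'_lt h1), hdlen]
    · rw [List.toFinset_card_of_nodup (nodup_of_chain'_gt h1), hdlen]
  · rw [card_seg (by omega)]
    omega
  · rw [card_seg h2s]
    omega


theorem chi'_noMono {N k n r s : ℕ} (hk : 3 ≤ k) (hnk : k < n) (hN : 1 ≤ N)
    (hs : 1 ≤ s) (h2s : 2*s ≤ r) (χ : Finset (Fin N) → Finset (Fin r))
    (hχm : ¬ HasMonoClique N k n r χ) :
    ¬ HasMonoClique (2^N) (k+1) (2*n-1) r (chi' N r s hN χ) := by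
  classical
  rintro ⟨S, hScard, c, hc⟩
  have hn4 : 4 ≤ n := by omega
  set L : ℕ := 2*n - 2 with hLdef
  have hL1 : 2*n - 1 = L + 1 := by omega
  have hLk : 2*k ≤ L := by omega
  have hnL : n ≤ L := by omega
  rw [hL1] at hScard
  set f := S.orderEmbOfFin hScard with hf
  set g : ℕ → Fin (2^N) := fun i => if h : i < L + 1 then f ⟨i, h⟩ else f ⟨0, by omega⟩
    with hg
  have hgmono : ∀ i j, i < j → j < L + 1 → g i < g j := by
    intro i j hij hj
    rw [hg]
    simp only [dif_pos hj, dif_pos (lt_trans hij hj)]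
    exact f.strictMono (by exact hij)
  have hgS : ∀ i, i < L + 1 → g i ∈ S := by
    intro i hi
    rw [hg]
    simp only [dif_pos hi]
    exact Finset.orderEmbOfFin_mem S hScard _
  set DD : ℕ → Fin N := fun i => dfin hN (g i) (g (i+1)) with hDD
  have hdelta_ne : ∀ x y z : Fin (2^N), x < y → y < z → dfin hN x y ≠ dfin hN y z := by
    intro x y z h1 h2 hEq
    exact dxor_ne (show x.val < y.val from h1) (show y.val < z.val from h2)
      (congrArg Fin.val hEq)
  have hdelta_max : ∀ x y z : Fin (2^N), x < y → y < z →
      (dfin hN x z).val = max (dfin hN x y).val (dfin hN y z).val := by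
    intro x y z h1 h2
    exact dxor_max (show x.val < y.val from h1) (show y.val < z.val from h2)
  have hDDne : ∀ i, i + 2 ≤ L → DD i ≠ DD (i+1) := by
    intro i hi
    exact hdelta_ne (g i) (g (i+1)) (g (i+2))
      (hgmono i (i+1) (by omega) (by omega)) (hgmono (i+1) (i+2) (by omega) (by omega))
  -- evaluation of the coloring on any (k+1)-element index list
  have hsubset_eval : ∀ J : List ℕ, J.IsChain (· < ·) → (∀ x ∈ J, x < L + 1) →
      J.length = k + 1 →
      c ∈ pcol N r s hN χ (List.zipWith (fun i j => dfin hN (g i) (g j)) J J.tail) := by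
    intro J hJc hJb hJl
    have hmapc : (J.map g).IsChain (· < ·) :=
      chain'_map_of_lt g _ (L+1) (fun i j hij hj => hgmono i j hij hj) J hJc hJb
    have hsub : (J.map g).toFinset ⊆ S := by
      intro x hx
      rw [List.mem_toFinset, List.mem_map] at hx
      obtain ⟨i, hi, rfl⟩ := hx
      exact hgS i (hJb i hi)
    have hcard : (J.map g).toFinset.card = k + 1 := by
      rw [List.toFinset_card_of_nodup (nodup_of_chain'_lt hmapc), List.length_map, hJl]
    have hcc := hc _ hsub hcard
    rw [chi'] at hcc
    rw [sort_of_chain'_fin hmapc] at hcc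
    rw [← List.map_tail, List.zipWith_map] at hcc
    exact hcc
  -- window lemma
  have hwin : ∀ w, w + k ≤ L → c ∈ pcol N r s hN χ ((List.range' w k).map DD) := by
    intro w hw
    have h1 := hsubset_eval (List.range' w (k+1))
      (List.isChain_iff_pairwise.mpr (List.pairwise_lt_range' (s := w) (n := k+1)))
      (fun x hx => by rw [List.mem_range'_1] at hx; omega)
      (by rw [List.length_range'])
    rw [show (List.range' w (k+1)).tail = List.range' (w+1) k by
        rw [List.range'_succ, List.tail_cons], zip_range'] at h1
    exact h1
  -- window consequences
  have hwinD2 : ∀ w u, w + k ≤ L → DD (w+1) < DD w → w ≤ u → u + 1 < w + k →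
      DD u < DD (u+1) → c ∈ seg r s (2*s) := by
    intro w u hw h1 h2 h3 h4
    have hwc := hwin w hw
    rw [pcol] at hwc
    rw [if_neg, if_neg] at hwc
    · exact hwc
    · -- getD condition is false
      have hexp : List.range' w k = w :: (w+1) :: List.range' (w+2) (k-2) := by
        rw [show k = (k-2)+1+1 by omega, List.range'_succ, List.range'_succ]
        congr 2 <;> omega
      rw [hexp]
      simp only [List.map_cons, List.getD_cons_zero, List.getD_cons_succ]
      exact not_lt.2 h1.le
    · rw [not_or, chain'_range'_map_iff, chain'_range'_map_iff]
      constructor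
      · intro H
        exact absurd (H w le_rfl (by omega)) (not_lt.2 h1.le)
      · intro H
        exact absurd (H u h2 h3) (not_lt.2 h4.le)
  have hwinD1 : ∀ w u, w + k ≤ L → DD w < DD (w+1) → w ≤ u → u + 1 < w + k →
      DD (u+1) < DD u → c ∈ seg r 0 s := by
    intro w u hw h1 h2 h3 h4
    have hwc := hwin w hw
    rw [pcol] at hwc
    rw [if_neg, if_pos] at hwc
    · exact hwc
    · have hexp : List.range' w k = w :: (w+1) :: List.range' (w+2) (k-2) := by
        rw [show k = (k-2)+1+1 by omega, List.range'_succ, List.range'_succ]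
        congr 2 <;> omega
      rw [hexp]
      simp only [List.map_cons, List.getD_cons_zero, List.getD_cons_succ]
      exact h1
    · rw [not_or, chain'_range'_map_iff, chain'_range'_map_iff]
      constructor
      · intro H
        exact absurd (H u h2 h3) (not_lt.2 h4.le)
      · intro H
        exact absurd (H w le_rfl (by omega)) (not_lt.2 h1.le)
  -- monotone runs give a monochromatic clique for χ : contradiction
  have hrunInc : ∀ a, a + n ≤ L → (∀ i j, a ≤ i → i < j → j < a + n → DD i < DD j) → False := by
    intro a han hrun
    have hskip : ∀ m p, a ≤ p → p + m < a + n → dfin hN (g p) (g (p+m+1)) = DD (p+m) := by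
      intro m
      induction m with
      | zero => intro p _ _; rfl
      | succ m IH =>
        intro p hp hb
        have h1 : g p < g (p+m+1) := hgmono _ _ (by omega) (by omega)
        have h2 : g (p+m+1) < g (p+m+1+1) := hgmono _ _ (by omega) (by omega)
        apply Fin.ext
        rw [show p + (m+1) + 1 = (p+m+1) + 1 by omega]
        rw [hdelta_max (g p) (g (p+m+1)) (g (p+m+1+1)) h1 h2, IH p hp (by omega)]
        have hlt : DD (p+m) < DD (p+m+1) := hrun (p+m) (p+m+1) (by omega) (by omega) (by omega)
        rw [show p + (m+1) = p + m + 1 by omega]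
        exact max_eq_right (le_of_lt hlt)
    apply hχm
    have hInjOn : ∀ I : Finset ℕ, (∀ x ∈ I, x < n) → Set.InjOn (fun i => DD (a+i)) I := by
      intro I hIb i hi j hj hij
      by_contra hne
      rcases lt_or_gt_of_ne hne with h | h
      · exact absurd hij (ne_of_lt (hrun (a+i) (a+j) (by omega) (by omega)
          (by have := hIb j hj; omega)))
      · exact absurd hij.symm (ne_of_lt (hrun (a+j) (a+i) (by omega) (by omega)
          (by have := hIb i hi; omega)))
    refine ⟨(Finset.range n).image (fun i => DD (a+i)), ?_, c, ?_⟩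
    · rw [Finset.card_image_of_injOn (hInjOn _ (fun x hx => Finset.mem_range.mp hx)),
        Finset.card_range]
    · intro e heT hecard
      obtain ⟨I, hIsub, hIim⟩ := Finset.subset_image_iff.mp heT
      have hIb : ∀ x ∈ I, x < n := fun x hx => Finset.mem_range.mp (hIsub hx)
      have hIcard : I.card = k := by
        rw [← hecard, ← hIim, Finset.card_image_of_injOn (hInjOn I hIb)]
      have hiLc : (I.sort (· ≤ ·)).IsChain (· < ·) :=
        (Finset.sortedLT_sort I).isChain
      have hiLlen : (I.sort (· ≤ ·)).length = k := by rw [Finset.length_sort, hIcard]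
      have hiLb : ∀ x ∈ I.sort (· ≤ ·), x < n := fun x hx =>
        hIb x ((Finset.mem_sort _).1 hx)
      have hiLtf : (I.sort (· ≤ ·)).toFinset = I := Finset.sort_toFinset _ _
      rcases hiLeq : I.sort (· ≤ ·) with _ | ⟨i1, rest⟩
      · rw [hiLeq] at hiLlen; simp at hiLlen; omega
      rw [hiLeq] at hiLc hiLlen hiLb hiLtf
      -- zip evaluation on the tail
      have hzip_inc : ∀ (re : List ℕ) (i0 : ℕ), (i0::re).IsChain (· < ·) →
          (∀ x ∈ i0::re, x < n) →
          List.zipWith (fun p q => dfin hN (g p) (g q))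
            ((a+i0+1) :: re.map (fun i => a+i+1)) (re.map (fun i => a+i+1))
            = re.map (fun i => DD (a+i)) := by
        intro re
        induction re with
        | nil => intro i0 _ _; simp
        | cons i2 re' IH =>
          intro i0 hch hb
          rw [List.isChain_cons_cons] at hch
          have h01 : i0 < i2 := hch.1
          have hi2n : i2 < n := hb i2 (by simp)
          simp only [List.map_cons, List.zipWith_cons_cons]
          congr 1
          · have hsp := hskip (i2 - i0 - 1) (a+i0+1) (by omega) (by omega)
            rw [show (a+i0+1) + (i2-i0-1) + 1 = a+i2+1 by omega,
              show (a+i0+1) + (i2-i0-1) = a+i2 by omega] at hsp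
            exact hsp
          · exact IH i2 hch.2 (fun x hx => hb x (List.mem_cons_of_mem i0 hx))
      have hJc : ((a+i1) :: ((i1 :: rest).map (fun i => a+i+1))).IsChain (· < ·) := by
        simp only [List.map_cons, List.isChain_cons_cons]
        refine ⟨by omega, ?_⟩
        have := chain'_map_of_lt (fun i => a+i+1) (· < ·) n
          (fun i j hij _ => show a+i+1 < a+j+1 by omega) (i1 :: rest) hiLc hiLb
        simpa using this
      have hJb : ∀ x ∈ (a+i1) :: ((i1 :: rest).map (fun i => a+i+1)), x < L + 1 := by
        intro x hx
        rw [List.mem_cons] at hx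
        rcases hx with hx | hx
        · have := hiLb i1 (by simp); omega
        · rw [List.mem_map] at hx
          obtain ⟨i, hi, rfl⟩ := hx
          have := hiLb i hi
          omega
      have hJlen : ((a+i1) :: ((i1 :: rest).map (fun i => a+i+1))).length = k + 1 := by
        have : (i1 :: rest).length = k := hiLlen
        simp only [List.length_cons, List.length_map] at this ⊢
        omega
      have hcol := hsubset_eval _ hJc hJb hJlen
      have hzip : List.zipWith (fun i j => dfin hN (g i) (g j))
          ((a+i1) :: ((i1 :: rest).map (fun i => a+i+1)))
          ((a+i1) :: ((i1 :: rest).map (fun i => a+i+1))).tail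
          = (i1 :: rest).map (fun i => DD (a+i)) := by
        rw [List.tail_cons]
        simp only [List.map_cons, List.zipWith_cons_cons]
        rw [hzip_inc rest i1 hiLc hiLb]
        try simp [hDD]
      rw [hzip] at hcol
      have hchain : ((i1 :: rest).map (fun i => DD (a+i))).IsChain (· < ·) := by
        apply chain'_map_of_lt (fun i => DD (a+i)) (· < ·) n
          (fun i j hij hj => hrun (a+i) (a+j) (by omega) (by omega) (by omega))
        · exact hiLc
        · exact hiLb
      rw [pcol, if_pos (Or.inl hchain), toFinset_map_list, hiLtf, hIim] at hcol
      exact hcol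
  have hrunDec : ∀ a, a + n ≤ L → (∀ i j, a ≤ i → i < j → j < a + n → DD j < DD i) → False := by
    intro a han hrun
    have hskip : ∀ m p, a ≤ p → p + m < a + n → dfin hN (g p) (g (p+m+1)) = DD p := by
      intro m
      induction m with
      | zero => intro p _ _; rfl
      | succ m IH =>
        intro p hp hb
        have h1 : g p < g (p+m+1) := hgmono _ _ (by omega) (by omega)
        have h2 : g (p+m+1) < g (p+m+1+1) := hgmono _ _ (by omega) (by omega)
        apply Fin.ext
        rw [show p + (m+1) + 1 = (p+m+1) + 1 by omega]
        rw [hdelta_max (g p) (g (p+m+1)) (g (p+m+1+1)) h1 h2, IH p hp (by omega)]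
        have hlt : DD (p+m+1) < DD p := hrun p (p+m+1) (by omega) (by omega) (by omega)
        exact max_eq_left (le_of_lt hlt)
    apply hχm
    have hInjOn : ∀ I : Finset ℕ, (∀ x ∈ I, x < n) → Set.InjOn (fun i => DD (a+i)) I := by
      intro I hIb i hi j hj hij
      by_contra hne
      rcases lt_or_gt_of_ne hne with h | h
      · exact absurd hij.symm (ne_of_lt (hrun (a+i) (a+j) (by omega) (by omega)
          (by have := hIb j hj; omega)))
      · exact absurd hij (ne_of_lt (hrun (a+j) (a+i) (by omega) (by omega)
          (by have := hIb i hi; omega)))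
    refine ⟨(Finset.range n).image (fun i => DD (a+i)), ?_, c, ?_⟩
    · rw [Finset.card_image_of_injOn (hInjOn _ (fun x hx => Finset.mem_range.mp hx)),
        Finset.card_range]
    · intro e heT hecard
      obtain ⟨I, hIsub, hIim⟩ := Finset.subset_image_iff.mp heT
      have hIb : ∀ x ∈ I, x < n := fun x hx => Finset.mem_range.mp (hIsub hx)
      have hIcard : I.card = k := by
        rw [← hecard, ← hIim, Finset.card_image_of_injOn (hInjOn I hIb)]
      have hiLc : (I.sort (· ≤ ·)).IsChain (· < ·) :=
        (Finset.sortedLT_sort I).isChain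
      have hiLlen : (I.sort (· ≤ ·)).length = k := by rw [Finset.length_sort, hIcard]
      have hiLb : ∀ x ∈ I.sort (· ≤ ·), x < n := fun x hx =>
        hIb x ((Finset.mem_sort _).1 hx)
      have hiLtf : (I.sort (· ≤ ·)).toFinset = I := Finset.sort_toFinset _ _
      rcases hiLeq : I.sort (· ≤ ·) with _ | ⟨i1, rest⟩
      · rw [hiLeq] at hiLlen; simp at hiLlen; omega
      rw [hiLeq] at hiLc hiLlen hiLb hiLtf
      have hle_last : ∀ (l : List ℕ) (hl : l ≠ []), l.IsChain (· < ·) →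
          ∀ x ∈ l, x ≤ l.getLast hl := by
        intro l
        induction l with
        | nil => intro hl; exact absurd rfl hl
        | cons x0 l' IH =>
          intro _ hch hx hmem
          cases l' with
          | nil => rw [List.mem_singleton] at hmem; subst hmem; simp
          | cons y t =>
            rw [List.isChain_cons_cons] at hch
            rw [List.getLast_cons (List.cons_ne_nil y t)]
            rw [List.mem_cons] at hmem
            rcases hmem with rfl | hmem
            · exact le_trans (le_of_lt hch.1)
                (IH (List.cons_ne_nil y t) hch.2 y (by simp))
            · exact IH (List.cons_ne_nil y t) hch.2 hx hmem
      have hzip_dec : ∀ (re : List ℕ) (i0 : ℕ), (i0::re).IsChain (· < ·) →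
          (∀ x ∈ i0::re, x < n) →
          List.zipWith (fun p q => dfin hN (g p) (g q))
            ((a+i0) :: (re.map (fun i => a+i) ++ [a + ((i0::re).getLast (List.cons_ne_nil _ _)) + 1]))
            (re.map (fun i => a+i) ++ [a + ((i0::re).getLast (List.cons_ne_nil _ _)) + 1])
            = (i0::re).map (fun i => DD (a+i)) := by
        intro re
        induction re with
        | nil =>
          intro i0 _ hb
          simp only [List.map_nil, List.nil_append, List.getLast_singleton,
            List.zipWith_cons_cons, List.zipWith_nil_right, List.map_cons]
          rfl

        | cons i2 re' IH =>
          intro i0 hch hb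
          rw [List.isChain_cons_cons] at hch
          have h01 : i0 < i2 := hch.1
          have hi2n : i2 < n := hb i2 (by simp)
          have hlast : (i0::i2::re').getLast (List.cons_ne_nil _ _)
              = (i2::re').getLast (List.cons_ne_nil _ _) := List.getLast_cons _
          rw [hlast]
          simp only [List.map_cons, List.cons_append, List.zipWith_cons_cons]
          congr 1
          · have hsp := hskip (i2 - i0 - 1) (a+i0) (by omega) (by omega)
            rw [show (a+i0) + (i2-i0-1) + 1 = a+i2 by omega] at hsp
            exact hsp
          · exact IH i2 hch.2 (fun x hx => hb x (List.mem_cons_of_mem i0 hx))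
      have hlastmem : (i1::rest).getLast (List.cons_ne_nil _ _) ∈ (i1::rest) :=
        List.getLast_mem _
      have hlastlt : (i1::rest).getLast (List.cons_ne_nil _ _) < n := hiLb _ hlastmem
      have hJc : (((i1 :: rest).map (fun i => a+i))
          ++ [a + ((i1::rest).getLast (List.cons_ne_nil _ _)) + 1]).IsChain (· < ·) := by
        rw [List.isChain_iff_pairwise, List.pairwise_append]
        refine ⟨?_, by simp, ?_⟩
        · rw [← List.isChain_iff_pairwise]
          exact chain'_map_of_lt (fun i => a+i) (· < ·) n
            (fun i j hij _ => show a+i < a+j by omega) (i1 :: rest) hiLc hiLb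
        · intro x hx y hy
          rw [List.mem_singleton] at hy
          subst hy
          rw [List.mem_map] at hx
          obtain ⟨i, hi, rfl⟩ := hx
          have := hle_last (i1::rest) (List.cons_ne_nil _ _) hiLc i hi
          omega
      have hJb : ∀ x ∈ ((i1 :: rest).map (fun i => a+i))
          ++ [a + ((i1::rest).getLast (List.cons_ne_nil _ _)) + 1], x < L + 1 := by
        intro x hx
        rw [List.mem_append] at hx
        rcases hx with hx | hx
        · rw [List.mem_map] at hx
          obtain ⟨i, hi, rfl⟩ := hx
          have := hiLb i hi
          omega
        · rw [List.mem_singleton] at hx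
          subst hx
          omega
      have hJlen : (((i1 :: rest).map (fun i => a+i))
          ++ [a + ((i1::rest).getLast (List.cons_ne_nil _ _)) + 1]).length = k + 1 := by
        have : (i1 :: rest).length = k := hiLlen
        simp only [List.length_append, List.length_map, List.length_singleton]
        omega
      have hcol := hsubset_eval _ hJc hJb hJlen
      have hexp : ((i1 :: rest).map (fun i => a+i))
          ++ [a + ((i1::rest).getLast (List.cons_ne_nil _ _)) + 1]
          = (a+i1) :: ((rest.map (fun i => a+i))
            ++ [a + ((i1::rest).getLast (List.cons_ne_nil _ _)) + 1]) := by
        simp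
      rw [hexp] at hcol
      rw [List.tail_cons] at hcol
      rw [hzip_dec rest i1 hiLc hiLb] at hcol
      have hchain : ((i1 :: rest).map (fun i => DD (a+i))).IsChain (· > ·) := by
        apply chain'_map_of_lt (fun i => DD (a+i)) (· > ·) n
          (fun i j hij hj => hrun (a+i) (a+j) (by omega) (by omega) (by omega))
        · exact hiLc
        · exact hiLb
      rw [pcol, if_pos (Or.inr hchain), toFinset_map_list, hiLtf, hIim] at hcol
      exact hcol
  -- monotone-closure helpers
  have closUp : ∀ (a b : ℕ), (∀ i, a ≤ i → i + 1 < b → DD i < DD (i+1)) →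
      ∀ i j, a ≤ i → i < j → j < b → DD i < DD j := by
    intro a b hstep i j hai hij hjb
    have key : ∀ m, i + m + 1 < b → DD i < DD (i+m+1) := by
      intro m
      induction m with
      | zero => intro h; exact hstep i hai h
      | succ m IH =>
        intro h
        exact lt_trans (IH (by omega)) (hstep (i+m+1) (by omega) (by omega))
    have h2 := key (j - i - 1) (by omega)
    rwa [show i + (j-i-1) + 1 = j by omega] at h2
  have closDn : ∀ (a b : ℕ), (∀ i, a ≤ i → i + 1 < b → DD (i+1) < DD i) →
      ∀ i j, a ≤ i → i < j → j < b → DD j < DD i := by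
    intro a b hstep i j hai hij hjb
    have key : ∀ m, i + m + 1 < b → DD (i+m+1) < DD i := by
      intro m
      induction m with
      | zero => intro h; exact hstep i hai h
      | succ m IH =>
        intro h
        exact lt_trans (hstep (i+m+1) (by omega) (by omega)) (IH (by omega))
    have h2 := key (j - i - 1) (by omega)
    rwa [show i + (j-i-1) + 1 = j by omega] at h2
  have htri : ∀ i, i + 2 ≤ L → DD i < DD (i+1) ∨ DD (i+1) < DD i := by
    intro i hi
    rcases lt_trichotomy (DD i) (DD (i+1)) with h | h | h
    · exact Or.inl h
    · exact absurd h (hDDne i hi)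
    · exact Or.inr h
  -- the two color memberships
  have hD2 : c ∈ seg r s (2*s) := by
    by_cases hA : ∃ t, t + 2 ≤ L ∧ DD (t+1) < DD t
    · set t := Nat.find hA with htdef
      obtain ⟨ht2, htdesc⟩ := Nat.find_spec hA
      have hpre : ∀ i, i < t → DD i < DD (i+1) := by
        intro i hi
        have h2 : i + 2 ≤ L := by omega
        rcases htri i h2 with h | h
        · exact h
        · exact absurd ⟨h2, h⟩ (Nat.find_min hA hi)
      by_cases hbig : n ≤ t + 1
      · exfalso
        apply hrunInc 0 (by omega)
        exact closUp 0 (0+n) (fun i h0 h1 => hpre i (by omega))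
      · push_neg at hbig
        by_cases hB : ∃ u, t < u ∧ u + 2 ≤ L ∧ DD u < DD (u+1)
        · set u := Nat.find hB with hudef
          obtain ⟨htu, hu2, hasc⟩ := Nat.find_spec hB
          have hdec : ∀ v, t ≤ v → v < u → DD (v+1) < DD v := by
            intro v h1 h2
            rcases eq_or_lt_of_le h1 with rfl | h1'
            · exact htdesc
            · have hv2 : v + 2 ≤ L := by omega
              rcases htri v hv2 with h | h
              · exact absurd ⟨h1', hv2, h⟩ (Nat.find_min hB h2)
              · exact h
          by_cases hcase : u + 2 ≤ t + k
          · exact hwinD2 t u (by omega) (hdec t le_rfl (by omega)) (by omega)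
              (by omega) hasc
          · obtain ⟨w, hw⟩ : ∃ w, w + k = u + 2 := ⟨u + 2 - k, by omega⟩
            exact hwinD2 w u (by omega) (hdec w (by omega) (by omega)) (by omega)
              (by omega) hasc
        · push_neg at hB
          exfalso
          apply hrunDec t (by omega)
          apply closDn t (t+n)
          intro i h1 h2
          have hi2 : i + 2 ≤ L := by omega
          rcases eq_or_lt_of_le h1 with rfl | h1'
          · exact htdesc
          · rcases htri i hi2 with h | h
            · exact absurd h (not_lt.2 (hB i h1' hi2))
            · exact h
    · push_neg at hA
      exfalso
      apply hrunInc 0 (by omega)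
      apply closUp 0 (0+n)
      intro i h0 h1
      have hi2 : i + 2 ≤ L := by omega
      rcases htri i hi2 with h | h
      · exact h
      · exact absurd h (not_lt.2 (hA i hi2))
  have hD1 : c ∈ seg r 0 s := by
    by_cases hA : ∃ t, t + 2 ≤ L ∧ DD t < DD (t+1)
    · set t := Nat.find hA with htdef
      obtain ⟨ht2, htasc⟩ := Nat.find_spec hA
      have hpre : ∀ i, i < t → DD (i+1) < DD i := by
        intro i hi
        have h2 : i + 2 ≤ L := by omega
        rcases htri i h2 with h | h
        · exact absurd ⟨h2, h⟩ (Nat.find_min hA hi)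
        · exact h
      by_cases hbig : n ≤ t + 1
      · exfalso
        apply hrunDec 0 (by omega)
        exact closDn 0 (0+n) (fun i h0 h1 => hpre i (by omega))
      · push_neg at hbig
        by_cases hB : ∃ u, t < u ∧ u + 2 ≤ L ∧ DD (u+1) < DD u
        · set u := Nat.find hB with hudef
          obtain ⟨htu, hu2, hdesc⟩ := Nat.find_spec hB
          have hinc : ∀ v, t ≤ v → v < u → DD v < DD (v+1) := by
            intro v h1 h2
            rcases eq_or_lt_of_le h1 with rfl | h1'
            · exact htasc
            · have hv2 : v + 2 ≤ L := by omega
              rcases htri v hv2 with h | h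
              · exact h
              · exact absurd ⟨h1', hv2, h⟩ (Nat.find_min hB h2)
          by_cases hcase : u + 2 ≤ t + k
          · exact hwinD1 t u (by omega) (hinc t le_rfl (by omega)) (by omega)
              (by omega) hdesc
          · obtain ⟨w, hw⟩ : ∃ w, w + k = u + 2 := ⟨u + 2 - k, by omega⟩
            exact hwinD1 w u (by omega) (hinc w (by omega) (by omega)) (by omega)
              (by omega) hdesc
        · push_neg at hB
          exfalso
          apply hrunInc t (by omega)
          apply closUp t (t+n)
          intro i h1 h2
          have hi2 : i + 2 ≤ L := by omega
          rcases eq_or_lt_of_le h1 with rfl | h1'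
          · exact htasc
          · rcases htri i hi2 with h | h
            · exact h
            · exact absurd h (not_lt.2 (hB i h1' hi2))
    · push_neg at hA
      exfalso
      apply hrunDec 0 (by omega)
      apply closDn 0 (0+n)
      intro i h0 h1
      have hi2 : i + 2 ≤ L := by omega
      rcases htri i hi2 with h | h
      · exact absurd h (not_lt.2 (hA i hi2))
      · exact h
  rw [mem_seg] at hD1 hD2
  omega


end StepUpAux

/-- Theorem 7: stepping up from `k`-uniform to `(k+1)`-uniform hypergraphs for `s ≤ r/2`. -/
theorem set_ramsey_step_up (k N n r s : ℕ) (hk : 3 ≤ k) (hnk : k < n) (hN : 1 ≤ N)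
    (hs : 1 ≤ s) (h2s : 2 * s ≤ r) (h : N < setRamsey k n r s) :
    2 ^ N < setRamsey (k + 1) (2 * n - 1) r s := by
  classical
  have hNnot : ¬ (∀ χ : Finset (Fin N) → Finset (Fin r),
      IsSetColoring N k r s χ → HasMonoClique N k n r χ) := by
    intro hmem
    have : setRamsey k n r s ≤ N := Nat.sInf_le hmem
    omega
  push_neg at hNnot
  obtain ⟨χ, hχs, hχm⟩ := hNnot
  have hcol := StepUpAux.chi'_isSetColoring (k := k) hN hs h2s χ hχs
  have hnom := StepUpAux.chi'_noMono hk hnk hN hs h2s χ hχm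
  obtain ⟨M0, hM0⟩ := StepUpAux.ramsey_set (k+1) (2*n-1) r s (by omega) hs
  have hne : {N' | ∀ χ' : Finset (Fin N') → Finset (Fin r),
      IsSetColoring N' (k+1) r s χ' → HasMonoClique N' (k+1) (2*n-1) r χ'}.Nonempty :=
    ⟨M0, hM0⟩
  by_contra hcon
  push_neg at hcon
  have hmem : ∀ χ' : Finset (Fin (setRamsey (k+1) (2*n-1) r s)) → Finset (Fin r),
      IsSetColoring (setRamsey (k+1) (2*n-1) r s) (k+1) r s χ' →
        HasMonoClique (setRamsey (k+1) (2*n-1) r s) (k+1) (2*n-1) r χ' :=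
    Nat.sInf_mem hne
  set emb := (Fin.castLEOrderEmb hcon).toEmbedding with hemb
  set χ'' : Finset (Fin (setRamsey (k+1) (2*n-1) r s)) → Finset (Fin r) :=
    fun e => StepUpAux.chi' N r s hN χ (e.map emb) with hχ''
  have hcol'' : IsSetColoring (setRamsey (k+1) (2*n-1) r s) (k+1) r s χ'' := by
    intro e he
    rw [hχ'']
    exact hcol _ (by rw [Finset.card_map, he])
  obtain ⟨S0, hS0card, c, hc0⟩ := hmem χ'' hcol''
  apply hnom
  refine ⟨S0.map emb, by rw [Finset.card_map, hS0card], c, ?_⟩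
  intro e he hecard
  set e0 := S0.filter (fun x => emb x ∈ e) with he0
  have h1 : e0.map emb = e := by
    ext x
    simp only [he0, Finset.mem_map, Finset.mem_filter]
    constructor
    · rintro ⟨y, ⟨_, hye⟩, rfl⟩
      exact hye
    · intro hx
      obtain ⟨y, hyS, rfl⟩ := Finset.mem_map.mp (he hx)
      exact ⟨y, ⟨hyS, hx⟩, rfl⟩
  have h2 : e0.card = k + 1 := by
    have h2' := congrArg Finset.card h1
    rw [Finset.card_map] at h2'
    omega
  have h3 := hc0 e0 (Finset.filter_subset _ _) h2
  rw [hχ''] at h3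
  simp only at h3
  rwa [h1] at h3
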